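/- arXiv:2407.19391 — 2 statements merged into one kernel-verified Lean document; each statement's English description precedes it below -/
import Mathlib

section
/- Two-profile Joint-Probability reduction for ExistsNecJR: let V be a finite set of n ≥ 1 voters with approval profile A : V → 2^C over a finite candidate set C, let k and r be integers with 1 ≤ r < k, and assume k divides n and r is even (so 2k − r is even). Let V⁺ be a set of n new voters and C⁺ = {c⁺_1, …, c⁺_{2k−r}} a set of 2k − r new candidates, disjoint from V and C. Define two approval profiles 𝒜₁ and 𝒜₂ on the extended voter set V ∪ V⁺: in both, each original voter i ∈ V approves exactly A_i; in 𝒜₁, for each j ∈ {1, …, (2k−r)/2} a designated block of exactly n/k new voters (the blocks being pairwise disjoint) approves exactly {c⁺_j}, and all remaining new voters approve the empty set; in 𝒜₂, likewise for each j ∈ {(2k−r)/2 + 1, …, 2k−r}, with pairwise disjoint blocks of exactly n/k new voters approving {c⁺_j} and all remaining new voters approving the empty set. Then there exists a committee W ⊆ C with |W| = r satisfying JR with respect to (A_i)_{i∈V} and parameter k if and only if there exists a committee W' ⊆ C ∪ C⁺ with |W'| = 2k that satisfies JR (with respect to parameter 2k over the 2n voters) under both 𝒜₁ and 𝒜₂.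 (This is the correctness of the reduction showing ExistsNecJR is NP-complete for the Joint Probability model even with only two plausible approval profiles.) -/
/-!
A block of `n / k` voters approving only a candidate `d` is a cohesive group of the size
JR protects once the electorate has `2n` voters and the committee `2k` seats, so a committee
that is JR under both profiles must contain all `2k - r` new candidates. Its remaining `r` seats
then form a JR committee for the original voters, because doubling both the electorate and the
committee size leaves the JR threshold unchanged. Conversely, a size-`r` JR committee together
with all new candidates is JR under both profiles.
-/

/-- A committee `W` satisfies justified representation (JR) with respect to the
approval profile `A` and parameter `k`. -/
def satisfiesJR {V C : Type*} [Fintype V] [DecidableEq C]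
    (A : V → Finset C) (k : ℕ) (W : Finset C) : Prop :=
  ∀ V' : Finset V, Fintype.card V ≤ k * V'.card →
    (∃ c : C, ∀ i ∈ V', c ∈ A i) → ∃ i ∈ V', (A i ∩ W).Nonempty

open Finset

theorem mem_of_satisfiesJR_of_forall_eq_singleton {U X : Type*} [Fintype U] [DecidableEq X]
    {B : U → Finset X} {k : ℕ} {W : Finset X} (hW : satisfiesJR B k W)
    {S : Finset U} {x : X} (hS : ∀ v ∈ S, B v = {x}) (hcard : Fintype.card U ≤ k * #S) :
    x ∈ W := by
  obtain ⟨v, hv, y, hy⟩ := hW S hcard ⟨x, fun v hv => by simp [hS v hv]⟩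
  rw [hS v hv, mem_inter, mem_singleton] at hy
  exact hy.1 ▸ hy.2

section Extension

variable {V Vp C D : Type*} [Fintype V] [Fintype Vp] [DecidableEq C] [DecidableEq D]
  {A : V → Finset C} {B : V ⊕ Vp → Finset (C ⊕ D)} {k m : ℕ}

theorem satisfiesJR_disjSum_univ [Fintype D] (hn : 1 ≤ Fintype.card V)
    (hm : Fintype.card (V ⊕ Vp) = m * Fintype.card V) (hm0 : 0 < m)
    (hBV : ∀ i, B (.inl i) = (A i).image .inl) (hBVp : ∀ v c, .inl c ∉ B (.inr v))
    {W : Finset C} (hW : satisfiesJR A k W) :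
    satisfiesJR B (m * k) (W.disjSum univ) := by
  rintro V' hV' ⟨c | d, hcommon⟩
  · have hright : V'.toRight = ∅ :=
      eq_empty_of_forall_notMem fun v hv => hBVp v c (hcommon _ (mem_toRight.1 hv))
    have hthreshold : Fintype.card V ≤ k * #V'.toLeft := by
      rw [← card_toLeft_add_card_toRight (u := V'), hright, card_empty, add_zero, hm,
        mul_assoc] at hV'
      exact Nat.le_of_mul_le_mul_left hV' hm0
    obtain ⟨i, hi, c', hc'⟩ := hW V'.toLeft hthreshold
      ⟨c, fun i hi => by simpa [hBV] using hcommon _ (mem_toLeft.1 hi)⟩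
    rw [mem_inter] at hc'
    exact ⟨.inl i, mem_toLeft.1 hi, .inl c',
      mem_inter.2 ⟨hBV i ▸ mem_image_of_mem _ hc'.1, inl_mem_disjSum.2 hc'.2⟩⟩
  · obtain ⟨i, hi⟩ : V'.Nonempty := by
      rw [← card_pos, Nat.pos_iff_ne_zero]
      intro h
      rw [h, mul_zero, Fintype.card_sum] at hV'
      omega
    exact ⟨i, hi, .inr d, mem_inter.2 ⟨hcommon i hi, inr_mem_disjSum.2 (mem_univ d)⟩⟩

theorem satisfiesJR_toLeft (hm : Fintype.card (V ⊕ Vp) = m * Fintype.card V)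
    (hBV : ∀ i, B (.inl i) = (A i).image .inl) {W' : Finset (C ⊕ D)}
    (hW' : satisfiesJR B (m * k) W') : satisfiesJR A k W'.toLeft := by
  rintro V'' hV'' ⟨c, hcommon⟩
  obtain ⟨_, hmem, x, hx⟩ := hW' (V''.map .inl)
    (by rw [hm, card_map, mul_assoc]; exact Nat.mul_le_mul_left m hV'')
    ⟨.inl c, by simpa [hBV] using hcommon⟩
  obtain ⟨i, hi, rfl⟩ := mem_map.1 hmem
  rw [mem_inter, Function.Embedding.inl_apply, hBV] at hx
  obtain ⟨c', hc', rfl⟩ := mem_image.1 hx.1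
  exact ⟨i, hi, c', mem_inter.2 ⟨hc', mem_toLeft.2 hx.2⟩⟩

theorem inr_mem_of_satisfiesJR (hdvd : k ∣ Fintype.card V)
    (hm : Fintype.card (V ⊕ Vp) = m * Fintype.card V) {W' : Finset (C ⊕ D)}
    (hW' : satisfiesJR B (m * k) W') {d : D}
    (hblock : (univ.filter fun v : Vp => B (.inr v) = {.inr d}).card = Fintype.card V / k) :
    .inr d ∈ W' :=
  mem_of_satisfiesJR_of_forall_eq_singleton hW'
    (S := (univ.filter fun v : Vp => B (.inr v) = {.inr d}).map .inr)
    (by simp)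
    (by rw [card_map, hblock, hm, mul_assoc, Nat.mul_div_cancel' hdvd])

end Extension

theorem stmt_10_general {V C Vp : Type*}
    [Fintype V] [DecidableEq C] [Fintype Vp]
    (hn : 1 ≤ Fintype.card V)
    (k r : ℕ) (hrk : r < k)
    (hdvd : k ∣ Fintype.card V)
    (hVp : Fintype.card Vp = Fintype.card V)
    (A : V → Finset C)
    (B₁ B₂ : (V ⊕ Vp) → Finset (C ⊕ Fin (2 * k - r)))
    (hB₁V : ∀ i : V, B₁ (Sum.inl i) = (A i).image Sum.inl)
    (hB₂V : ∀ i : V, B₂ (Sum.inl i) = (A i).image Sum.inl)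
    (hB₁form : ∀ v : Vp, B₁ (Sum.inr v) = ∅ ∨
      ∃ j : Fin (2 * k - r), j.val < (2 * k - r) / 2 ∧ B₁ (Sum.inr v) = {Sum.inr j})
    (hB₁block : ∀ j : Fin (2 * k - r), j.val < (2 * k - r) / 2 →
      (Finset.univ.filter (fun v : Vp => B₁ (Sum.inr v) = {Sum.inr j})).card
        = Fintype.card V / k)
    (hB₂form : ∀ v : Vp, B₂ (Sum.inr v) = ∅ ∨
      ∃ j : Fin (2 * k - r), (2 * k - r) / 2 ≤ j.val ∧ B₂ (Sum.inr v) = {Sum.inr j})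
    (hB₂block : ∀ j : Fin (2 * k - r), (2 * k - r) / 2 ≤ j.val →
      (Finset.univ.filter (fun v : Vp => B₂ (Sum.inr v) = {Sum.inr j})).card
        = Fintype.card V / k) :
    (∃ W : Finset C, W.card = r ∧ satisfiesJR A k W) ↔
      (∃ W' : Finset (C ⊕ Fin (2 * k - r)), W'.card = 2 * k ∧
        satisfiesJR B₁ (2 * k) W' ∧ satisfiesJR B₂ (2 * k) W') := by
  have hcard : Fintype.card (V ⊕ Vp) = 2 * Fintype.card V := by
    rw [Fintype.card_sum, hVp, two_mul]
  constructor
  · rintro ⟨W, hW, hJR⟩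
    refine ⟨W.disjSum univ, by rw [card_disjSum, hW, card_univ, Fintype.card_fin]; omega,
      satisfiesJR_disjSum_univ hn hcard two_pos hB₁V (fun v c h => ?_) hJR,
      satisfiesJR_disjSum_univ hn hcard two_pos hB₂V (fun v c h => ?_) hJR⟩
    · rcases hB₁form v with h' | ⟨j, -, h'⟩ <;> simp [h'] at h
    · rcases hB₂form v with h' | ⟨j, -, h'⟩ <;> simp [h'] at h
  · rintro ⟨W', hW', hJR₁, hJR₂⟩
    have hright : W'.toRight = univ := eq_univ_of_forall fun j => mem_toRight.2 <| by
      rcases lt_or_ge j.val ((2 * k - r) / 2) with hj | hj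
      · exact inr_mem_of_satisfiesJR hdvd hcard hJR₁ (hB₁block j hj)
      · exact inr_mem_of_satisfiesJR hdvd hcard hJR₂ (hB₂block j hj)
    have hsplit := card_toLeft_add_card_toRight (u := W')
    rw [hright, card_univ, Fintype.card_fin, hW'] at hsplit
    exact ⟨W'.toLeft, by omega, satisfiesJR_toLeft hcard hB₁V hJR₁⟩

/-- two-profile Joint-Probability reduction for ExistsNecJR:
with `k ∣ n`, `r` even, `1 ≤ r < k`, extend the election by `n` new voters
(`Vp`) and `2k - r` new candidates (indexed by `Fin (2k - r)`).  The profile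
`B₁` gives each original voter its approval set `A i`; each of the candidates
`j` with `j < (2k - r)/2` is approved (as a singleton) by a block of exactly
`n/k` new voters, and all remaining new voters approve the empty set.  `B₂` is
analogous for the candidates `j` with `(2k - r)/2 ≤ j`.  Then there is a
size-`r` committee over `C` satisfying JR (parameter `k`) iff there is a
size-`2k` committee over `C ⊕ Fin (2k - r)` satisfying JR (parameter `2k`,
over the `2n` voters) under both `B₁` and `B₂`. -/
theorem stmt_10 {V C Vp : Type*}
    [Fintype V] [Fintype C] [DecidableEq C] [Fintype Vp] [DecidableEq Vp]
    (hn : 1 ≤ Fintype.card V)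
    (k r : ℕ) (hr : 1 ≤ r) (hrk : r < k)
    (hdvd : k ∣ Fintype.card V) (hreven : 2 ∣ r)
    (hVp : Fintype.card Vp = Fintype.card V)
    (A : V → Finset C)
    (B₁ B₂ : (V ⊕ Vp) → Finset (C ⊕ Fin (2 * k - r)))
    (hB₁V : ∀ i : V, B₁ (Sum.inl i) = (A i).image Sum.inl)
    (hB₂V : ∀ i : V, B₂ (Sum.inl i) = (A i).image Sum.inl)
    (hB₁form : ∀ v : Vp, B₁ (Sum.inr v) = ∅ ∨
      ∃ j : Fin (2 * k - r), j.val < (2 * k - r) / 2 ∧ B₁ (Sum.inr v) = {Sum.inr j})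
    (hB₁block : ∀ j : Fin (2 * k - r), j.val < (2 * k - r) / 2 →
      (Finset.univ.filter (fun v : Vp => B₁ (Sum.inr v) = {Sum.inr j})).card
        = Fintype.card V / k)
    (hB₂form : ∀ v : Vp, B₂ (Sum.inr v) = ∅ ∨
      ∃ j : Fin (2 * k - r), (2 * k - r) / 2 ≤ j.val ∧ B₂ (Sum.inr v) = {Sum.inr j})
    (hB₂block : ∀ j : Fin (2 * k - r), (2 * k - r) / 2 ≤ j.val →
      (Finset.univ.filter (fun v : Vp => B₂ (Sum.inr v) = {Sum.inr j})).card
        = Fintype.card V / k) :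
    (∃ W : Finset C, W.card = r ∧ satisfiesJR A k W) ↔
      (∃ W' : Finset (C ⊕ Fin (2 * k - r)), W'.card = 2 * k ∧
        satisfiesJR B₁ (2 * k) W' ∧ satisfiesJR B₂ (2 * k) W') :=
  stmt_10_general hn k r hrk hdvd hVp A B₁ B₂ hB₁V hB₂V hB₁form hB₁block hB₂form hB₂block
end

section
/- Candidate-Probability reduction for ExistsNecPJR: let V be a finite set of n ≥ 1 voters with approval profile A : V → 2^C over a finite candidate set C, let k ≥ 1, and let W ⊆ C with |W| = k. Let V⁺ be a set of n new voters and C⁺ a set of k new candidates, disjoint from V and C respectively. In the extended election with voter set V ∪ V⁺ (2n voters), candidate set C ∪ C⁺, and parameter 2k, the plausible approval profiles are exactly those in which each original voter i ∈ V approves exactly A_i and each new voter in V⁺ approves an arbitrary subset of W ∪ C⁺. Then W satisfies PJR with respect to (A_i)_{i∈V} and parameter k if and only if there exists a committee W' ⊆ C ∪ C⁺ with |W'| = 2k that satisfies PJR (with respect to parameter 2k over the 2n voters) under every plausible approval profile of the extended election; moreover when this holds, W' = W ∪ C⁺ is such a committee. -/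
/-!
The new voters are what pins the committee down. Letting all of them approve the same `k`
candidates of `W ∪ C⁺` makes them a `k`-cohesive group of the extended election, so every
necessarily-PJR committee of size `2k` contains `W` and `C⁺`, i.e. it is `W ∪ C⁺`. For that
committee, a cohesive group of original voters is cohesive in the original election with the
same common and the same represented candidates (the doubled electorate is matched by the
doubled parameter), while any cohesive group containing a new voter commonly approves only
members of `W ∪ C⁺`, all of them elected.
-/

/-- A committee `W` satisfies proportional justified representation (PJR) with
respect to the approval profile `A` and parameter `k`: for every `ℓ ≥ 1` and
every `ℓ`-cohesive group `V'` (i.e. `k * |V'| ≥ ℓ * n` and the voters of `V'`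
commonly approve at least `ℓ` candidates), the union of the approval sets of
`V'` contains at least `ℓ` members of `W`. -/
def satisfiesPJR {V C : Type*} [Fintype V] [Fintype C] [DecidableEq C]
    (A : V → Finset C) (k : ℕ) (W : Finset C) : Prop :=
  ∀ ℓ : ℕ, 1 ≤ ℓ → ∀ V' : Finset V,
    ℓ * Fintype.card V ≤ k * V'.card →
    ℓ ≤ (Finset.univ.filter (fun c : C => ∀ i ∈ V', c ∈ A i)).card →
    ℓ ≤ ((V'.biUnion A) ∩ W).card

open Finset Sum

section Approvals

variable {V C : Type*} [Fintype C] [DecidableEq C]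

def commonApprovals (A : V → Finset C) (V' : Finset V) : Finset C :=
  univ.filter fun c => ∀ i ∈ V', c ∈ A i

@[simp]
lemma mem_commonApprovals {A : V → Finset C} {V' : Finset V} {c : C} :
    c ∈ commonApprovals A V' ↔ ∀ i ∈ V', c ∈ A i := by
  simp [commonApprovals]

lemma commonApprovals_subset_biUnion_inter {A : V → Finset C} {V' : Finset V} {W : Finset C}
    {i : V} (hi : i ∈ V') (hiW : A i ⊆ W) : commonApprovals A V' ⊆ V'.biUnion A ∩ W :=
  fun _ hc =>
    have hci := mem_commonApprovals.1 hc i hi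
    mem_inter.2 ⟨mem_biUnion.2 ⟨i, hi, hci⟩, hiW hci⟩

lemma nonempty_of_cohesive [Fintype V] {V' : Finset V} {k ℓ : ℕ} (hn : 1 ≤ Fintype.card V)
    (hℓ : 1 ≤ ℓ) (hcoh : ℓ * Fintype.card V ≤ k * #V') : V'.Nonempty := by
  rw [← card_pos]
  nlinarith

lemma satisfiesPJR.subset_of_unanimous [Fintype V] {A : V → Finset C} {k : ℕ} {W : Finset C}
    (h : satisfiesPJR A k W) {G : Finset V} {T : Finset C} (hT : 1 ≤ #T)
    (hG : ∀ i ∈ G, A i = T) (hcoh : #T * Fintype.card V ≤ k * #G) : T ⊆ W := by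
  have hcommon : T ⊆ commonApprovals A G :=
    fun _ hc => mem_commonApprovals.2 fun i hi => hG i hi ▸ hc
  have hunion : G.biUnion A ⊆ T := biUnion_subset.2 fun i hi => (hG i hi).subset
  have hrep := (h #T hT G hcoh (card_le_card hcommon)).trans
    (card_le_card (inter_subset_inter_right hunion))
  exact inter_eq_left.1 (eq_of_subset_of_card_le inter_subset_left hrep)

end Approvals

section Sum

variable {α β : Type*}

lemma Finset.image_inl_union_image_inr [DecidableEq α] [DecidableEq β]
    (s : Finset α) (t : Finset β) :
    s.image inl ∪ t.image inr = s.disjSum t := by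
  ext x
  cases x <;> simp

lemma Finset.image_inl_inter [DecidableEq α] [DecidableEq β]
    (s : Finset α) (u : Finset (α ⊕ β)) :
    s.image inl ∩ u = (s ∩ u.toLeft).image inl := by
  ext x
  cases x <;> simp

lemma Finset.eq_map_inl_toLeft {u : Finset (α ⊕ β)} (h : ∀ b, inr b ∉ u) :
    u = u.toLeft.map .inl := by
  ext x
  cases x <;> simp [h]

end Sum

section Extension

variable {V C Vp Cp : Type*} [DecidableEq C] [DecidableEq Cp]
  {A : V → Finset C} {B : V ⊕ Vp → Finset (C ⊕ Cp)} {k : ℕ}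

lemma biUnion_map_inl (hB : ∀ i, B (inl i) = (A i).image inl) (V₁ : Finset V) :
    (V₁.map .inl).biUnion B = (V₁.biUnion A).image inl := by
  ext x
  simp only [mem_biUnion, mem_map, Function.Embedding.inl_apply, mem_image]
  constructor
  · rintro ⟨_, ⟨i, hi, rfl⟩, hx⟩
    obtain ⟨c, hc, rfl⟩ := mem_image.1 (hB i ▸ hx)
    exact ⟨c, ⟨i, hi, hc⟩, rfl⟩
  · rintro ⟨c, ⟨i, hi, hc⟩, rfl⟩
    exact ⟨inl i, ⟨i, hi, rfl⟩, hB i ▸ mem_image_of_mem _ hc⟩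

variable [Fintype C] [Fintype Cp]

lemma commonApprovals_map_inl (hB : ∀ i, B (inl i) = (A i).image inl) {V₁ : Finset V}
    (hV₁ : V₁.Nonempty) :
    commonApprovals B (V₁.map .inl) = (commonApprovals A V₁).image inl := by
  ext x
  obtain ⟨i₀, hi₀⟩ := hV₁
  cases x with
  | inl c => simp [hB]
  | inr e => simpa [hB] using ⟨i₀, hi₀⟩

variable [Fintype V] [Fintype Vp]

lemma satisfiesPJR.of_toLeft (hn : 1 ≤ Fintype.card V) (hVp : Fintype.card Vp = Fintype.card V)
    {W' : Finset (C ⊕ Cp)} (hA : satisfiesPJR A k W'.toLeft)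
    (hB : ∀ i, B (inl i) = (A i).image inl) (hBnew : ∀ j, B (inr j) ⊆ W') :
    satisfiesPJR B (2 * k) W' := by
  intro ℓ hℓ V' hcoh hcom
  by_cases hnew : ∃ j, inr j ∈ V'
  · obtain ⟨j, hj⟩ := hnew
    exact hcom.trans (card_le_card (commonApprovals_subset_biUnion_inter hj (hBnew j)))
  · rw [not_exists] at hnew
    set V₁ := V'.toLeft
    rw [eq_map_inl_toLeft hnew] at hcoh hcom ⊢
    rw [Fintype.card_sum, hVp, card_map] at hcoh
    replace hcoh : ℓ * Fintype.card V ≤ k * #V₁ := by linarith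
    change ℓ ≤ #(commonApprovals B _) at hcom
    rw [commonApprovals_map_inl hB (nonempty_of_cohesive hn hℓ hcoh),
      card_image_of_injective _ inl_injective] at hcom
    rw [biUnion_map_inl hB, image_inl_inter, card_image_of_injective _ inl_injective]
    exact hA ℓ hℓ V₁ hcoh hcom

lemma satisfiesPJR.toLeft (hn : 1 ≤ Fintype.card V) (hVp : Fintype.card Vp = Fintype.card V)
    {W' : Finset (C ⊕ Cp)} (hB : ∀ i, B (inl i) = (A i).image inl)
    (h : satisfiesPJR B (2 * k) W') : satisfiesPJR A k W'.toLeft := by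
  intro ℓ hℓ V₁ hcoh hcom
  have hrep := h ℓ hℓ (V₁.map .inl)
    (by rw [Fintype.card_sum, hVp, card_map]; linarith)
    (by
      change ℓ ≤ #(commonApprovals B _)
      rwa [commonApprovals_map_inl hB (nonempty_of_cohesive hn hℓ hcoh),
        card_image_of_injective _ inl_injective])
  rwa [biUnion_map_inl hB, image_inl_inter, card_image_of_injective _ inl_injective] at hrep

lemma disjSum_univ_subset_of_forall_plausible (hk : 1 ≤ k)
    (hVp : Fintype.card Vp = Fintype.card V) (hCp : Fintype.card Cp = k) {W : Finset C}
    (hW : #W = k) {W' : Finset (C ⊕ Cp)}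
    (hall : ∀ B : V ⊕ Vp → Finset (C ⊕ Cp), (∀ i, B (inl i) = (A i).image inl) →
      (∀ j, B (inr j) ⊆ W.disjSum univ) → satisfiesPJR B (2 * k) W') :
    W.disjSum univ ⊆ W' := by
  have hforced : ∀ T ⊆ W.disjSum univ, #T = k → T ⊆ W' := by
    intro T hT hTk
    refine (hall (Sum.elim (fun i => (A i).image inl) fun _ => T) (fun _ => rfl)
      (fun _ => hT)).subset_of_unanimous (G := univ.map .inr) (hTk ▸ hk) (by simp) ?_
    rw [hTk, card_map, card_univ, Fintype.card_sum, hVp]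
    linarith
  have hleft := hforced (W.disjSum ∅) (disjSum_mono_right _ (empty_subset _))
    (by rw [card_disjSum, hW, card_empty, add_zero])
  have hright := hforced ((∅ : Finset C).disjSum univ) (disjSum_mono_left _ (empty_subset _))
    (by rw [card_disjSum, card_empty, card_univ, hCp, zero_add])
  rw [disjSum_subset] at hleft hright ⊢
  exact ⟨hleft.1, hright.2⟩

end Extension

theorem stmt_13_general {V C Vp Cp : Type*}
    [Fintype V] [Fintype C] [DecidableEq C]
    [Fintype Vp] [Fintype Cp] [DecidableEq Cp]
    (hn : 1 ≤ Fintype.card V)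
    (k : ℕ) (hk : 1 ≤ k)
    (hVp : Fintype.card Vp = Fintype.card V)
    (hCp : Fintype.card Cp = k)
    (A : V → Finset C) (W : Finset C) (hW : W.card = k) :
    (satisfiesPJR A k W ↔
      (∃ W' : Finset (C ⊕ Cp), W'.card = 2 * k ∧
        ∀ B : (V ⊕ Vp) → Finset (C ⊕ Cp),
          (∀ i : V, B (Sum.inl i) = (A i).image Sum.inl) →
          (∀ j : Vp, B (Sum.inr j) ⊆
            W.image Sum.inl ∪ Finset.univ.image (Sum.inr : Cp → C ⊕ Cp)) →
          satisfiesPJR B (2 * k) W')) ∧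
    (satisfiesPJR A k W →
      ∀ B : (V ⊕ Vp) → Finset (C ⊕ Cp),
        (∀ i : V, B (Sum.inl i) = (A i).image Sum.inl) →
        (∀ j : Vp, B (Sum.inr j) ⊆
          W.image Sum.inl ∪ Finset.univ.image (Sum.inr : Cp → C ⊕ Cp)) →
        satisfiesPJR B (2 * k)
          (W.image Sum.inl ∪ Finset.univ.image (Sum.inr : Cp → C ⊕ Cp))) := by
  simp only [image_inl_union_image_inr]
  have hcard : #(W.disjSum (univ : Finset Cp)) = 2 * k := by
    rw [card_disjSum, card_univ, hW, hCp, two_mul]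
  have hextend (hA : satisfiesPJR A k W) (B : V ⊕ Vp → Finset (C ⊕ Cp))
      (hB : ∀ i, B (inl i) = (A i).image inl) (hBnew : ∀ j, B (inr j) ⊆ W.disjSum univ) :
      satisfiesPJR B (2 * k) (W.disjSum univ) :=
    satisfiesPJR.of_toLeft hn hVp (by rwa [toLeft_disjSum]) hB hBnew
  refine ⟨⟨fun hA => ⟨_, hcard, hextend hA⟩, ?_⟩, hextend⟩
  rintro ⟨W', hW'card, hall⟩
  have hW' : W' = W.disjSum univ :=
    (eq_of_subset_of_card_le (disjSum_univ_subset_of_forall_plausible hk hVp hCp hW hall)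
      (hW'card.trans hcard.symm).le).symm
  have hrestrict := (hall (Sum.elim (fun i => (A i).image inl) fun _ => ∅) (fun _ => rfl)
    (fun _ => empty_subset _)).toLeft hn hVp (fun _ => rfl)
  rwa [hW', toLeft_disjSum] at hrestrict

/-- Candidate-Probability reduction for ExistsNecPJR: extend the
election `(V, C, A, k)` and a committee `W ⊆ C` of size `k` by a set `Vp` of
`n` new voters and a set `Cp` of `k` new candidates; in the extended election
(with `2n` voters and parameter `2k`) the plausible profiles are exactly those
where each original voter approves exactly `A i` and each new voter approves an
arbitrary subset of `W ∪ Cp`.  Then `W` satisfies PJR (parameter `k`) iff some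
size-`2k` committee over `C ⊕ Cp` satisfies PJR under every plausible profile
of the extended election; moreover, in that case `W ∪ Cp` is such a committee. -/
theorem stmt_13 {V C Vp Cp : Type*}
    [Fintype V] [DecidableEq V] [Fintype C] [DecidableEq C]
    [Fintype Vp] [DecidableEq Vp] [Fintype Cp] [DecidableEq Cp]
    (hn : 1 ≤ Fintype.card V)
    (k : ℕ) (hk : 1 ≤ k)
    (hVp : Fintype.card Vp = Fintype.card V)
    (hCp : Fintype.card Cp = k)
    (A : V → Finset C) (W : Finset C) (hW : W.card = k) :
    (satisfiesPJR A k W ↔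
      (∃ W' : Finset (C ⊕ Cp), W'.card = 2 * k ∧
        ∀ B : (V ⊕ Vp) → Finset (C ⊕ Cp),
          (∀ i : V, B (Sum.inl i) = (A i).image Sum.inl) →
          (∀ j : Vp, B (Sum.inr j) ⊆
            W.image Sum.inl ∪ Finset.univ.image (Sum.inr : Cp → C ⊕ Cp)) →
          satisfiesPJR B (2 * k) W')) ∧
    (satisfiesPJR A k W →
      ∀ B : (V ⊕ Vp) → Finset (C ⊕ Cp),
        (∀ i : V, B (Sum.inl i) = (A i).image Sum.inl) →
        (∀ j : Vp, B (Sum.inr j) ⊆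
          W.image Sum.inl ∪ Finset.univ.image (Sum.inr : Cp → C ⊕ Cp)) →
        satisfiesPJR B (2 * k)
          (W.image Sum.inl ∪ Finset.univ.image (Sum.inr : Cp → C ⊕ Cp))) :=
  stmt_13_general hn k hk hVp hCp A W hW
end
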